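/- (Gap preservation of the reduction.) Suppose 6εn < 1/2. Then: (a) if some labeling of the label cover instance satisfies a set S of edges, there exists a coalition assignment in the reduced MRTA instance with total reward at least |S|; and (b) for every coalition assignment C with Σ_T C(T) ≤ 6n and with at most one labeled task per vertex assigned exactly one robot, the total reward is strictly less than k + 1/2, where k is the maximum number of edges simultaneously satisfiable by any labeling. Hence such an assignment with total reward at least m certifies that all m edges are simultaneously satisfiable, while if at most αm edges (α < 1) are simultaneously satisfiable every such assignment has total reward strictly less than αm + 1/2. -/

import Mathlib

namespace MRTA

/-- Tasks of the reduced MRTA instance: a source task per vertex `w : U ⊕ V`,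
a labeled task per vertex-label pair, and an edge task per edge and label pair. -/
inductive Task (U V Λ : Type) where
  | src : U ⊕ V → Task U V Λ
  | lab : U ⊕ V → Λ → Task U V Λ
  | edg : U → V → Λ → Λ → Task U V Λ
  deriving DecidableEq

variable {U V Λ : Type} [Fintype U] [Fintype V] [Fintype Λ]
  [DecidableEq U] [DecidableEq V] [DecidableEq Λ]

/-- Reward of a source task `w`: `ε` if exactly one robot executes it, else `0`. -/
noncomputable def srcReward (ε : ℝ) (C : Task U V Λ → ℕ) (w : U ⊕ V) : ℝ :=
  if C (.src w) = 1 then ε else 0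

/-- Reward of a labeled task `(w, l)`: `ε` if exactly one robot executes it and the
corresponding source task earned positive reward, else `0`. -/
noncomputable def labReward (ε : ℝ) (C : Task U V Λ → ℕ) (w : U ⊕ V) (l : Λ) : ℝ :=
  if C (.lab w l) = 1 ∧ 0 < srcReward ε C w then ε else 0

/-- Reward of an edge task `((u,v),(lu,lv))`: `1` if exactly two robots execute it and both
corresponding labeled tasks earned positive reward, else `0`. -/
noncomputable def edgReward (ε : ℝ) (C : Task U V Λ → ℕ) (u : U) (v : V) (lu lv : Λ) : ℝ :=
  if C (.edg u v lu lv) = 2 ∧ 0 < labReward ε C (Sum.inl u) lu ∧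
      0 < labReward ε C (Sum.inr v) lv then 1 else 0

/-- Reward of an arbitrary task. -/
noncomputable def reward (ε : ℝ) (C : Task U V Λ → ℕ) : Task U V Λ → ℝ
  | .src w => srcReward ε C w
  | .lab w l => labReward ε C w l
  | .edg u v lu lv => edgReward ε C u v lu lv

/-- The source tasks of the instance. -/
def srcTasks : Finset (Task U V Λ) := Finset.univ.image Task.src

/-- The labeled tasks of the instance: one for each vertex `w` and label `l ∈ L w`. -/
def labTasks (L : U ⊕ V → Finset Λ) : Finset (Task U V Λ) :=
  Finset.univ.biUnion fun w => (L w).image (Task.lab w)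

/-- The edge tasks of the instance: one for each edge `e ∈ E` and pair `p ∈ R e`. -/
def edgTasks (E : Finset (U × V)) (R : U × V → Finset (Λ × Λ)) : Finset (Task U V Λ) :=
  E.biUnion fun e => (R e).image fun p => Task.edg e.1 e.2 p.1 p.2

/-- All tasks of the reduced MRTA instance. -/
def allTasks (L : U ⊕ V → Finset Λ) (E : Finset (U × V)) (R : U × V → Finset (Λ × Λ)) :
    Finset (Task U V Λ) :=
  srcTasks ∪ labTasks L ∪ edgTasks E R

/-- The total reward of a coalition assignment `C`: the sum of rewards over all tasks. -/
noncomputable def totalReward (L : U ⊕ V → Finset Λ) (E : Finset (U × V))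
    (R : U × V → Finset (Λ × Λ)) (ε : ℝ) (C : Task U V Λ → ℕ) : ℝ :=
  ∑ t ∈ allTasks L E R, reward ε C t

end MRTA

/-!
A labeling `ℓ` yields the assignment with one robot on every source task and on each task
`(w, ℓ w)`, and two robots on each edge task `((u,v),(ℓ u, ℓ v))`; it earns `1` for every edge
that `ℓ` satisfies. Conversely, if at most one labeled task per vertex carries exactly one robot,
these tasks define a labeling `g`, and an edge task can only pay out at the label pair chosen by
`g`. So the edge tasks earn at most the number of edges `g` satisfies, hence at most `k`, while
the source and labeled tasks together earn at most `4εn ≤ 6εn < 1/2`.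
-/

namespace MRTA

open Finset

variable {U V Λ : Type}

section Rewards

variable {ε : ℝ} {C : Task U V Λ → ℕ}

lemma reward_nonneg (hε : 0 ≤ ε) (t : Task U V Λ) : 0 ≤ reward ε C t := by
  cases t <;> simp only [reward, srcReward, labReward, edgReward] <;> split_ifs <;> norm_num [hε]

lemma srcReward_le (hε : 0 ≤ ε) (w : U ⊕ V) : srcReward ε C w ≤ ε := by
  unfold srcReward; split_ifs <;> simp [hε]

lemma labReward_le_ite (hε : 0 ≤ ε) (w : U ⊕ V) (l : Λ) :
    labReward ε C w l ≤ if C (.lab w l) = 1 then ε else 0 := by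
  unfold labReward; split_ifs <;> simp_all

lemma lab_eq_one_of_labReward_pos {w : U ⊕ V} {l : Λ} (h : 0 < labReward ε C w l) :
    C (.lab w l) = 1 := by
  by_contra hne
  simp [labReward, hne] at h

lemma sum_labReward_le (hε : 0 ≤ ε) {w : U ⊕ V} {s : Finset Λ}
    (hs : ∀ l₁ ∈ s, ∀ l₂ ∈ s, C (.lab w l₁) = 1 → C (.lab w l₂) = 1 → l₁ = l₂) :
    ∑ l ∈ s, labReward ε C w l ≤ ε := by
  have hcard : #(s.filter fun l => C (.lab w l) = 1) ≤ 1 :=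
    card_le_one.2 fun a ha b hb => by
      rw [mem_filter] at ha hb
      exact hs a ha.1 b hb.1 ha.2 hb.2
  calc ∑ l ∈ s, labReward ε C w l
      ≤ ∑ l ∈ s, if C (.lab w l) = 1 then ε else 0 := sum_le_sum fun l _ => labReward_le_ite hε w l
    _ = #(s.filter fun l => C (.lab w l) = 1) * ε := by
        rw [sum_ite, sum_const_zero, add_zero, sum_const, nsmul_eq_mul]
    _ ≤ 1 * ε := by gcongr; exact_mod_cast hcard
    _ = ε := one_mul ε

end Rewards

lemma exists_choice_of_unique {α β : Type*} {s : α → Finset β} (hs : ∀ a, (s a).Nonempty)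
    {P : α → β → Prop} (hP : ∀ a, ∀ b₁ ∈ s a, ∀ b₂ ∈ s a, P a b₁ → P a b₂ → b₁ = b₂) :
    ∃ g : α → β, ∀ a, g a ∈ s a ∧ ∀ b ∈ s a, P a b → g a = b := by
  have : ∀ a, ∃ b ∈ s a, ∀ b' ∈ s a, P a b' → b = b' := by
    intro a
    by_cases h : ∃ b ∈ s a, P a b
    · obtain ⟨b, hb, hPb⟩ := h
      exact ⟨b, hb, fun b' hb' hPb' => hP a b hb b' hb' hPb hPb'⟩
    · obtain ⟨b, hb⟩ := hs a
      exact ⟨b, hb, fun b' hb' hPb' => absurd ⟨b', hb', hPb'⟩ h⟩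
  choose g hg using this
  exact ⟨g, hg⟩

section Satisfied

variable [DecidableEq Λ]

def numSatisfied (E : Finset (U × V)) (R : U × V → Finset (Λ × Λ)) (g : U ⊕ V → Λ) : ℕ :=
  #(E.filter fun e => (g (.inl e.1), g (.inr e.2)) ∈ R e)

variable {L : U ⊕ V → Finset Λ} {E : Finset (U × V)} {R : U × V → Finset (Λ × Λ)} {ε : ℝ}
  {C : Task U V Λ → ℕ}

lemma edgReward_le_ite {g : U ⊕ V → Λ} {u : U} {v : V} {lu lv : Λ}
    (hu : C (.lab (.inl u) lu) = 1 → g (.inl u) = lu)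
    (hv : C (.lab (.inr v) lv) = 1 → g (.inr v) = lv) :
    edgReward ε C u v lu lv ≤ if (lu, lv) = (g (.inl u), g (.inr v)) then 1 else 0 := by
  unfold edgReward
  split_ifs with h hp
  · rfl
  · obtain ⟨-, h₁, h₂⟩ := h
    rw [hu (lab_eq_one_of_labReward_pos h₁), hv (lab_eq_one_of_labReward_pos h₂)] at hp
    exact absurd rfl hp
  · exact zero_le_one
  · rfl

lemma sum_edgReward_le_numSatisfied (hR : ∀ e ∈ E, R e ⊆ L (.inl e.1) ×ˢ L (.inr e.2))
    {g : U ⊕ V → Λ} (hg : ∀ w, ∀ l ∈ L w, C (.lab w l) = 1 → g w = l) :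
    ∑ e ∈ E, ∑ p ∈ R e, edgReward ε C e.1 e.2 p.1 p.2 ≤ numSatisfied E R g := by
  have hedge : ∀ e ∈ E, ∑ p ∈ R e, edgReward ε C e.1 e.2 p.1 p.2 ≤
      if (g (.inl e.1), g (.inr e.2)) ∈ R e then 1 else 0 := by
    intro e he
    rw [← sum_ite_eq' (R e) _ fun _ => (1 : ℝ)]
    refine sum_le_sum fun p hp => ?_
    obtain ⟨hp₁, hp₂⟩ := mem_product.1 (hR e he hp)
    exact edgReward_le_ite (hg _ _ hp₁) (hg _ _ hp₂)
  calc ∑ e ∈ E, ∑ p ∈ R e, edgReward ε C e.1 e.2 p.1 p.2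
      ≤ ∑ e ∈ E, if (g (.inl e.1), g (.inr e.2)) ∈ R e then (1 : ℝ) else 0 := sum_le_sum hedge
    _ = numSatisfied E R g := by rw [sum_boole, numSatisfied]

def assignmentOf (ℓ : U ⊕ V → Λ) : Task U V Λ → ℕ
  | .src _ => 1
  | .lab w l => if l = ℓ w then 1 else 0
  | .edg u v lu lv => if lu = ℓ (.inl u) ∧ lv = ℓ (.inr v) then 2 else 0

lemma edgReward_assignmentOf (hε : 0 < ε) (ℓ : U ⊕ V → Λ) (u : U) (v : V) :
    edgReward ε (assignmentOf ℓ) u v (ℓ (.inl u)) (ℓ (.inr v)) = 1 := by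
  simp [edgReward, labReward, srcReward, assignmentOf, hε]

end Satisfied

section Tasks

variable [DecidableEq U] [DecidableEq V] [DecidableEq Λ] {M : Type*} [AddCommMonoid M]

lemma sum_edgTasks (E : Finset (U × V)) (R : U × V → Finset (Λ × Λ)) (f : Task U V Λ → M) :
    ∑ t ∈ edgTasks E R, f t = ∑ e ∈ E, ∑ p ∈ R e, f (.edg e.1 e.2 p.1 p.2) := by
  rw [edgTasks, sum_biUnion]
  · refine sum_congr rfl fun e _ => sum_image fun p _ q _ h => ?_
    obtain ⟨-, -, h₁, h₂⟩ := Task.edg.inj h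
    exact Prod.ext h₁ h₂
  · intro e _ e' _ hne
    simp only [Function.onFun, disjoint_left, mem_image]
    rintro _ ⟨p, -, rfl⟩ ⟨q, -, h⟩
    obtain ⟨h₁, h₂, -, -⟩ := Task.edg.inj h
    exact hne (Prod.ext h₁.symm h₂.symm)

variable [Fintype U] [Fintype V]

lemma sum_srcTasks (f : Task U V Λ → M) : ∑ t ∈ srcTasks, f t = ∑ w, f (.src w) :=
  sum_image fun _ _ _ _ h => Task.src.inj h

lemma sum_labTasks (L : U ⊕ V → Finset Λ) (f : Task U V Λ → M) :
    ∑ t ∈ labTasks L, f t = ∑ w, ∑ l ∈ L w, f (.lab w l) := by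
  rw [labTasks, sum_biUnion]
  · exact sum_congr rfl fun w _ => sum_image fun _ _ _ _ h => (Task.lab.inj h).2
  · intro w _ w' _ hne
    simp only [Function.onFun, disjoint_left, mem_image]
    rintro _ ⟨l, -, rfl⟩ ⟨l', -, h⟩
    exact hne (Task.lab.inj h).1.symm

lemma sum_allTasks (L : U ⊕ V → Finset Λ) (E : Finset (U × V)) (R : U × V → Finset (Λ × Λ))
    (f : Task U V Λ → M) :
    ∑ t ∈ allTasks L E R, f t = ∑ w, f (.src w) + ∑ w, ∑ l ∈ L w, f (.lab w l) +
      ∑ e ∈ E, ∑ p ∈ R e, f (.edg e.1 e.2 p.1 p.2) := by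
  have h₁ : Disjoint (srcTasks : Finset (Task U V Λ)) (labTasks L) := by
    simp only [disjoint_left, srcTasks, labTasks, mem_image, mem_biUnion, mem_univ, true_and]
    rintro _ ⟨w, rfl⟩ ⟨w', l, -, h⟩
    cases h
  have h₂ : Disjoint (srcTasks ∪ labTasks L) (edgTasks E R) := by
    simp only [disjoint_left, srcTasks, labTasks, edgTasks, mem_union, mem_image, mem_biUnion,
      mem_univ, true_and]
    rintro _ (⟨w, rfl⟩ | ⟨w, l, -, rfl⟩) ⟨e, -, p, -, h⟩ <;> cases h
  rw [allTasks, sum_union h₂, sum_union h₁, sum_srcTasks, sum_labTasks, sum_edgTasks]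

lemma card_le_totalReward_assignmentOf {L : U ⊕ V → Finset Λ} {E : Finset (U × V)}
    {R : U × V → Finset (Λ × Λ)} {ε : ℝ} (hε : 0 < ε) {ℓ : U ⊕ V → Λ} {S : Finset (U × V)}
    (hSE : S ⊆ E) (hS : ∀ e ∈ S, (ℓ (.inl e.1), ℓ (.inr e.2)) ∈ R e) :
    (#S : ℝ) ≤ totalReward L E R ε (assignmentOf ℓ) := by
  set C := assignmentOf ℓ
  have hnonneg := reward_nonneg (C := C) hε.le
  calc (#S : ℝ) = ∑ e ∈ S, edgReward ε C e.1 e.2 (ℓ (.inl e.1)) (ℓ (.inr e.2)) := by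
        simp [C, edgReward_assignmentOf hε]
    _ ≤ ∑ e ∈ S, ∑ p ∈ R e, edgReward ε C e.1 e.2 p.1 p.2 :=
        sum_le_sum fun e he => single_le_sum (f := fun p => edgReward ε C e.1 e.2 p.1 p.2)
          (fun p _ => hnonneg (.edg _ _ _ _)) (hS e he)
    _ ≤ ∑ e ∈ E, ∑ p ∈ R e, edgReward ε C e.1 e.2 p.1 p.2 :=
        sum_le_sum_of_subset_of_nonneg hSE fun e _ _ =>
          sum_nonneg fun p _ => hnonneg (.edg _ _ _ _)
    _ ≤ totalReward L E R ε C := by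
        rw [totalReward, sum_allTasks]
        have hsrc := sum_nonneg fun w (_ : w ∈ univ) => hnonneg (.src w)
        have hlab := sum_nonneg fun w (_ : w ∈ univ) =>
          sum_nonneg fun l (_ : l ∈ L w) => hnonneg (.lab w l)
        exact le_add_of_nonneg_left (add_nonneg hsrc hlab)

end Tasks

section LabelCover

variable [Fintype U] [Fintype V] [Fintype Λ] [DecidableEq U] [DecidableEq V] [DecidableEq Λ]

def maxSatisfied (L : U ⊕ V → Finset Λ) (E : Finset (U × V)) (R : U × V → Finset (Λ × Λ)) : ℕ :=
  (univ.filter fun g : U ⊕ V → Λ => ∀ w, g w ∈ L w).sup (numSatisfied E R)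

lemma numSatisfied_le_maxSatisfied {L : U ⊕ V → Finset Λ} {E : Finset (U × V)}
    {R : U × V → Finset (Λ × Λ)} {g : U ⊕ V → Λ} (hg : ∀ w, g w ∈ L w) :
    numSatisfied E R g ≤ maxSatisfied L E R :=
  le_sup (f := numSatisfied E R) (mem_filter.2 ⟨mem_univ g, hg⟩)

lemma maxSatisfied_le_card (L : U ⊕ V → Finset Λ) (E : Finset (U × V))
    (R : U × V → Finset (Λ × Λ)) : maxSatisfied L E R ≤ #E :=
  Finset.sup_le fun _ _ => card_filter_le _ _

variable {L : U ⊕ V → Finset Λ} {E : Finset (U × V)} {R : U × V → Finset (Λ × Λ)} {ε : ℝ}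
  {C : Task U V Λ → ℕ}

theorem totalReward_le_maxSatisfied_add (hε : 0 ≤ ε) (hL : ∀ w, (L w).Nonempty)
    (hR : ∀ e ∈ E, R e ⊆ L (.inl e.1) ×ˢ L (.inr e.2))
    (hC : ∀ w, ∀ l₁ ∈ L w, ∀ l₂ ∈ L w, C (.lab w l₁) = 1 → C (.lab w l₂) = 1 → l₁ = l₂) :
    totalReward L E R ε C ≤ maxSatisfied L E R + 2 * Fintype.card (U ⊕ V) * ε := by
  obtain ⟨g, hg⟩ := exists_choice_of_unique hL hC
  have hsrc : ∑ w, srcReward ε C w ≤ Fintype.card (U ⊕ V) * ε := by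
    simpa using sum_le_sum fun w (_ : w ∈ univ) => srcReward_le (C := C) hε w
  have hlab : ∑ w, ∑ l ∈ L w, labReward ε C w l ≤ Fintype.card (U ⊕ V) * ε := by
    simpa using sum_le_sum fun w (_ : w ∈ univ) => sum_labReward_le hε (hC w)
  have hedg := sum_edgReward_le_numSatisfied (ε := ε) hR fun w => (hg w).2
  have hmax : (numSatisfied E R g : ℝ) ≤ maxSatisfied L E R :=
    mod_cast numSatisfied_le_maxSatisfied fun w => (hg w).1
  rw [totalReward, sum_allTasks]
  simp only [reward]
  linarith

/-- **Gap preservation of the reduction.** Suppose `6 ε n < 1/2`. Then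
(a) if some labeling satisfies a set `S` of edges, there is a coalition assignment with total
reward at least `|S|`; (b) every coalition assignment `C` with at most `6 n` robot-task
executions and at most one labeled task per vertex assigned exactly one robot has total reward
strictly less than `k + 1/2`, where `k` is the maximum number of simultaneously satisfiable
edges; hence (c) such an assignment with total reward at least `m = |E|` certifies that all
`m` edges are simultaneously satisfiable, while (d) if at most `α m` edges (`α < 1`) are
simultaneously satisfiable, every such assignment has total reward strictly less than
`α m + 1/2`. -/
theorem gap_preservation (ε : ℝ) (hε : 0 < ε)
    (L : U ⊕ V → Finset Λ) (hLne : ∀ w, (L w).Nonempty)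
    (E : Finset (U × V)) (R : U × V → Finset (Λ × Λ))
    (hR : ∀ e ∈ E, R e ⊆ (L (Sum.inl e.1)) ×ˢ (L (Sum.inr e.2)))
    (n : ℕ) (hU : Fintype.card U = n) (hV : Fintype.card V = n)
    (hgap : 6 * ε * (n : ℝ) < 1 / 2)
    (k : ℕ)
    (hk : k = ((Finset.univ : Finset (U ⊕ V → Λ)).filter fun g => ∀ w, g w ∈ L w).sup
      fun g => (E.filter fun e => (g (Sum.inl e.1), g (Sum.inr e.2)) ∈ R e).card) :
    -- (a)
    (∀ ℓ : U ⊕ V → Λ, (∀ w, ℓ w ∈ L w) → ∀ S : Finset (U × V), S ⊆ E →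
      (∀ e ∈ S, (ℓ (Sum.inl e.1), ℓ (Sum.inr e.2)) ∈ R e) →
      ∃ C : Task U V Λ → ℕ, (S.card : ℝ) ≤ totalReward L E R ε C) ∧
    -- (b)
    (∀ C : Task U V Λ → ℕ, (∑ t ∈ allTasks L E R, C t ≤ 6 * n) →
      (∀ w : U ⊕ V, ∀ l₁ ∈ L w, ∀ l₂ ∈ L w,
        C (.lab w l₁) = 1 → C (.lab w l₂) = 1 → l₁ = l₂) →
      totalReward L E R ε C < (k : ℝ) + 1 / 2) ∧
    -- (c)
    (∀ C : Task U V Λ → ℕ, (∑ t ∈ allTasks L E R, C t ≤ 6 * n) →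
      (∀ w : U ⊕ V, ∀ l₁ ∈ L w, ∀ l₂ ∈ L w,
        C (.lab w l₁) = 1 → C (.lab w l₂) = 1 → l₁ = l₂) →
      (E.card : ℝ) ≤ totalReward L E R ε C → k = E.card) ∧
    -- (d)
    (∀ α : ℝ, α < 1 → (k : ℝ) ≤ α * (E.card : ℝ) →
      ∀ C : Task U V Λ → ℕ, (∑ t ∈ allTasks L E R, C t ≤ 6 * n) →
      (∀ w : U ⊕ V, ∀ l₁ ∈ L w, ∀ l₂ ∈ L w,
        C (.lab w l₁) = 1 → C (.lab w l₂) = 1 → l₁ = l₂) →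
      totalReward L E R ε C < α * (E.card : ℝ) + 1 / 2) := by
  have hmax : k = maxSatisfied L E R := hk
  have hbound : ∀ C : Task U V Λ → ℕ, (∀ w : U ⊕ V, ∀ l₁ ∈ L w, ∀ l₂ ∈ L w,
      C (.lab w l₁) = 1 → C (.lab w l₂) = 1 → l₁ = l₂) →
      totalReward L E R ε C < (k : ℝ) + 1 / 2 := by
    intro C hC
    have := totalReward_le_maxSatisfied_add hε.le hLne hR hC
    rw [← hmax, Fintype.card_sum, hU, hV] at this
    push_cast at this
    linarith
  have hkE : k ≤ #E := hmax ▸ maxSatisfied_le_card L E R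
  refine ⟨fun ℓ _ S hSE hS => ⟨assignmentOf ℓ, card_le_totalReward_assignmentOf hε hSE hS⟩,
    fun C _ => hbound C, fun C _ hC hE => ?_, fun α _ hkα C _ hC => ?_⟩
  · have : (#E : ℝ) < k + 1 := by linarith [hbound C hC]
    have : #E < k + 1 := by exact_mod_cast this
    omega
  · linarith [hbound C hC]

end LabelCover

end MRTA
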